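/- arXiv:1609.04055 — 5 statements merged into one kernel-verified Lean document; each statement's English description precedes it below -/
import Mathlib

section
/- Let (ΩR, d_R) and (ΩS, d_S) be differential calculi over R and S satisfying the density condition, i.e. Ω^n R = R d_R(R)···d_R(R) and similarly for S. Then the tensor product differential graded algebra (ΩR ⊗ ΩS, d_T) over T = R ⊗ S also satisfies the density condition: every element of Ω^k T is a sum of elements of the form t_0 d_T(t_1)···d_T(t_k) with t_i ∈ T. -/
open scoped TensorProduct

/-!
STATEMENT 2: If the differential calculi `(ΩR, d_R)` and `(ΩS, d_S)` satisfy the density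
condition `Ω^{n+1} = Ω^n · d(degree-zero part)`, then the tensor product differential
graded algebra `(ΩR ⊗ ΩS, d_T)` over `T = R ⊗ S` also satisfies the density condition:
every element of `Ω^k T` is a sum of elements `t₀ d_T(t₁) ⋯ d_T(t_k)` with `tᵢ ∈ T`.

Encoding as in STATEMENT 1; `prodSpan mulT dT T0 k` is the space of sums of products
`t₀ d_T(t₁) ⋯ d_T(t_k)` with all `tᵢ ∈ T0` (the degree-zero part of `ΩT`).
-/

/-- `Ω^i R ⊗ Ω^j S` inside `ΩR ⊗ ΩS`. -/
noncomputable def PT {F ΩR ΩS : Type*} [Field F] [Ring ΩR] [Ring ΩS] [Algebra F ΩR]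
    [Algebra F ΩS] (𝒜 : ℕ → Submodule F ΩR) (ℬ : ℕ → Submodule F ΩS) (i j : ℕ) :
    Submodule F (ΩR ⊗[F] ΩS) :=
  Submodule.span F {x : ΩR ⊗[F] ΩS | ∃ ω ∈ 𝒜 i, ∃ ν ∈ ℬ j, x = ω ⊗ₜ[F] ν}

/-- The grading `Ω^k T = ⊕_{i ≤ k} Ω^i R ⊗ Ω^{k-i} S` of the tensor product calculus. -/
noncomputable def GT {F ΩR ΩS : Type*} [Field F] [Ring ΩR] [Ring ΩS] [Algebra F ΩR]
    [Algebra F ΩS] (𝒜 : ℕ → Submodule F ΩR) (ℬ : ℕ → Submodule F ΩS) (k : ℕ) :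
    Submodule F (ΩR ⊗[F] ΩS) :=
  ⨆ (i : ℕ) (_ : i ≤ k), PT 𝒜 ℬ i (k - i)

/-- Sums of products `t₀ d(t₁) ⋯ d(t_k)` with all `tᵢ` in the degree-zero part `T0`. -/
noncomputable def prodSpan {F V : Type*} [Field F] [AddCommGroup V] [Module F V]
    (mulT : V →ₗ[F] V →ₗ[F] V) (dT : V →ₗ[F] V) (T0 : Submodule F V) : ℕ → Submodule F V
  | 0 => T0
  | n + 1 => Submodule.span F
      {x : V | ∃ a ∈ prodSpan mulT dT T0 n, ∃ t ∈ T0, x = mulT a (dT t)}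

theorem stmt2 {F ΩR ΩS : Type*} [Field F] [Ring ΩR] [Ring ΩS] [Algebra F ΩR] [Algebra F ΩS]
    (𝒜 : ℕ → Submodule F ΩR) (ℬ : ℕ → Submodule F ΩS)
    (hAint : DirectSum.IsInternal 𝒜) (hBint : DirectSum.IsInternal ℬ)
    (hA1 : (1 : ΩR) ∈ 𝒜 0) (hB1 : (1 : ΩS) ∈ ℬ 0)
    (hAmul : ∀ i j : ℕ, ∀ a ∈ 𝒜 i, ∀ b ∈ 𝒜 j, a * b ∈ 𝒜 (i + j))
    (hBmul : ∀ i j : ℕ, ∀ a ∈ ℬ i, ∀ b ∈ ℬ j, a * b ∈ ℬ (i + j))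
    (dR : ΩR →ₗ[F] ΩR) (dS : ΩS →ₗ[F] ΩS)
    (hdR_deg : ∀ n : ℕ, ∀ a ∈ 𝒜 n, dR a ∈ 𝒜 (n + 1))
    (hdS_deg : ∀ n : ℕ, ∀ b ∈ ℬ n, dS b ∈ ℬ (n + 1))
    (hdR_sq : ∀ a : ΩR, dR (dR a) = 0) (hdS_sq : ∀ b : ΩS, dS (dS b) = 0)
    (hdR_leib : ∀ i : ℕ, ∀ a ∈ 𝒜 i, ∀ b : ΩR,
      dR (a * b) = dR a * b + ((-1 : F) ^ i) • (a * dR b))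
    (hdS_leib : ∀ i : ℕ, ∀ a ∈ ℬ i, ∀ b : ΩS,
      dS (a * b) = dS a * b + ((-1 : F) ^ i) • (a * dS b))
    -- density for `ΩR` and `ΩS`
    (hdR_dens : ∀ n : ℕ,
      𝒜 (n + 1) = Submodule.span F {x : ΩR | ∃ a ∈ 𝒜 n, ∃ r ∈ 𝒜 0, x = a * dR r})
    (hdS_dens : ∀ n : ℕ,
      ℬ (n + 1) = Submodule.span F {x : ΩS | ∃ a ∈ ℬ n, ∃ r ∈ ℬ 0, x = a * dS r})
    -- the twisted product and the tensor differential on `ΩT = ΩR ⊗ ΩS`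
    (mulT : (ΩR ⊗[F] ΩS) →ₗ[F] (ΩR ⊗[F] ΩS) →ₗ[F] (ΩR ⊗[F] ΩS))
    (hmulT : ∀ (j i' : ℕ), ∀ ν ∈ ℬ j, ∀ ω' ∈ 𝒜 i', ∀ (ω : ΩR) (ν' : ΩS),
      mulT (ω ⊗ₜ[F] ν) (ω' ⊗ₜ[F] ν')
        = ((-1 : F) ^ (j * i')) • ((ω * ω') ⊗ₜ[F] (ν * ν')))
    (dT : (ΩR ⊗[F] ΩS) →ₗ[F] (ΩR ⊗[F] ΩS))
    (hdT : ∀ i : ℕ, ∀ ω ∈ 𝒜 i, ∀ ν : ΩS,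
      dT (ω ⊗ₜ[F] ν) = ω ⊗ₜ[F] dS ν + ((-1 : F) ^ i) • (dR ω ⊗ₜ[F] ν)) :
    -- density for `ΩT`: every element of `Ω^k T` is a sum of products
    -- `t₀ d_T(t₁) ⋯ d_T(t_k)` with `tᵢ ∈ T`
    ∀ k : ℕ, GT 𝒜 ℬ k ≤ prodSpan mulT dT (PT 𝒜 ℬ 0 0) k := by
  -- dR 1 = 0 and dS 1 = 0
  have hdR1 : dR 1 = 0 := by
    have h := hdR_leib 0 1 hA1 1
    simp only [one_mul, mul_one, pow_zero, one_smul] at h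
    exact left_eq_add.mp h
  have hdS1 : dS 1 = 0 := by
    have h := hdS_leib 0 1 hB1 1
    simp only [one_mul, mul_one, pow_zero, one_smul] at h
    exact left_eq_add.mp h
  intro k
  induction k with
  | zero =>
    apply iSup₂_le
    intro i hi
    interval_cases i
    exact le_rfl
  | succ k ih =>
    apply iSup₂_le
    intro i hi
    rw [PT, Submodule.span_le]
    rintro x ⟨ω, hω, ν, hν, rfl⟩
    by_cases hik : i ≤ k
    · -- j = k+1-i ≥ 1
      have hj : k + 1 - i = (k - i) + 1 := by omega
      rw [hj, hdS_dens] at hν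
      induction hν using Submodule.span_induction with
      | mem x hx =>
        obtain ⟨b, hb, s, hs, rfl⟩ := hx
        have key : ω ⊗ₜ[F] (b * dS s) = mulT (ω ⊗ₜ[F] b) (dT ((1 : ΩR) ⊗ₜ[F] s)) := by
          rw [hdT 0 1 hA1 s, hdR1, map_add, hmulT (k - i) 0 b hb 1 hA1 ω (dS s)]
          simp
        rw [key]
        apply Submodule.subset_span
        refine ⟨ω ⊗ₜ[F] b, ?_, (1 : ΩR) ⊗ₜ[F] s, ?_, rfl⟩
        · apply ih
          apply Submodule.mem_iSup_of_mem i
          apply Submodule.mem_iSup_of_mem hik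
          exact Submodule.subset_span ⟨ω, hω, b, hb, rfl⟩
        · exact Submodule.subset_span ⟨1, hA1, s, hs, rfl⟩
      | zero => simp
      | add y z hy hz hy' hz' => rw [TensorProduct.tmul_add]; exact add_mem hy' hz'
      | smul c y hy hy' => rw [TensorProduct.tmul_smul]; exact Submodule.smul_mem _ c hy'
    · -- i = k+1, ν ∈ ℬ 0
      have hi1 : i = k + 1 := by omega
      subst hi1
      have hν0 : ν ∈ ℬ 0 := by simpa using hν
      rw [hdR_dens] at hω
      induction hω using Submodule.span_induction with
      | mem x hx =>
        obtain ⟨a, ha, r, hr, rfl⟩ := hx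
        have key : (a * dR r) ⊗ₜ[F] ν = mulT (a ⊗ₜ[F] ν) (dT (r ⊗ₜ[F] (1 : ΩS))) := by
          rw [hdT 0 r hr 1, hdS1]
          simp only [pow_zero, one_smul, TensorProduct.tmul_zero, zero_add]
          rw [hmulT 0 1 ν hν0 (dR r) (hdR_deg 0 r hr) a (1 : ΩS)]
          simp
        rw [key]
        apply Submodule.subset_span
        refine ⟨a ⊗ₜ[F] ν, ?_, r ⊗ₜ[F] (1 : ΩS), ?_, rfl⟩
        · apply ih
          apply Submodule.mem_iSup_of_mem k
          apply Submodule.mem_iSup_of_mem le_rfl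
          refine Submodule.subset_span ⟨a, ha, ν, ?_, rfl⟩
          simpa using hν0
        · exact Submodule.subset_span ⟨r, hr, 1, hB1, rfl⟩
      | zero => simp
      | add y z hy hz hy' hz' => rw [TensorProduct.add_tmul]; exact add_mem hy' hz'
      | smul c y hy hy' => rw [← TensorProduct.smul_tmul']; exact Submodule.smul_mem _ c hy'
end

section
/- Let (ΩR, d_R) and (ΩS, d_S) be connected differential calculi over F-algebras R and S, meaning ker(d_R|_R) = F·1 and ker(d_S|_S) = F·1. Then the tensor product calculus (ΩR ⊗ ΩS, d_T) over T = R ⊗ S is connected: if x ∈ R ⊗ S satisfies d_T(x) = 0, then x is a scalar multiple of 1 ⊗ 1. -/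
open scoped TensorProduct

/-!
STATEMENT 3: If `(ΩR, d_R)` and `(ΩS, d_S)` are connected differential calculi
(`ker(d_R|_R) = F·1`, `ker(d_S|_S) = F·1`), then the tensor product calculus
`(ΩR ⊗ ΩS, d_T)` over `T = R ⊗ S` is connected: if `x ∈ R ⊗ S` satisfies `d_T x = 0`,
then `x` is a scalar multiple of `1 ⊗ 1`.

Encoding as in STATEMENT 1; the degree-zero part `T = R ⊗ S` of `ΩT` is
`span{a ⊗ b | a ∈ 𝒜 0, b ∈ ℬ 0}`.
-/

/-- Auxiliary: existence of a projection onto the `n`-th piece of an internal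
direct sum decomposition. -/
theorem stmt3_exists_proj {F M : Type*} [Field F] [AddCommGroup M] [Module F M]
    (𝒜 : ℕ → Submodule F M) (h : DirectSum.IsInternal 𝒜) (n : ℕ) :
    ∃ π : M →ₗ[F] M, (∀ x, π x ∈ 𝒜 n) ∧ (∀ x ∈ 𝒜 n, π x = x) ∧
      (∀ m, m ≠ n → ∀ x ∈ 𝒜 m, π x = 0) := by
  classical
  set e := LinearEquiv.ofBijective (DirectSum.coeLinearMap 𝒜) h with he
  refine ⟨(𝒜 n).subtype ∘ₗ (DirectSum.component F ℕ (fun i => 𝒜 i) n) ∘ₗ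
      e.symm.toLinearMap, fun x => ?_, fun x hx => ?_, fun m hm x hx => ?_⟩
  · exact ((DirectSum.component F ℕ (fun i => 𝒜 i) n) (e.symm x)).2
  · simp only [LinearMap.comp_apply, LinearEquiv.coe_coe, Submodule.coe_subtype,
      ← DirectSum.apply_eq_component]
    rw [he, h.ofBijective_coeLinearMap_of_mem hx]
  · simp only [LinearMap.comp_apply, LinearEquiv.coe_coe, Submodule.coe_subtype,
      ← DirectSum.apply_eq_component]
    rw [he, h.ofBijective_coeLinearMap_of_mem_ne hm hx]
    rfl

theorem stmt3 {F ΩR ΩS : Type*} [Field F] [Ring ΩR] [Ring ΩS] [Algebra F ΩR] [Algebra F ΩS]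
    (𝒜 : ℕ → Submodule F ΩR) (ℬ : ℕ → Submodule F ΩS)
    (hAint : DirectSum.IsInternal 𝒜) (hBint : DirectSum.IsInternal ℬ)
    (hA1 : (1 : ΩR) ∈ 𝒜 0) (hB1 : (1 : ΩS) ∈ ℬ 0)
    (hAmul : ∀ i j : ℕ, ∀ a ∈ 𝒜 i, ∀ b ∈ 𝒜 j, a * b ∈ 𝒜 (i + j))
    (hBmul : ∀ i j : ℕ, ∀ a ∈ ℬ i, ∀ b ∈ ℬ j, a * b ∈ ℬ (i + j))
    (dR : ΩR →ₗ[F] ΩR) (dS : ΩS →ₗ[F] ΩS)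
    (hdR_deg : ∀ n : ℕ, ∀ a ∈ 𝒜 n, dR a ∈ 𝒜 (n + 1))
    (hdS_deg : ∀ n : ℕ, ∀ b ∈ ℬ n, dS b ∈ ℬ (n + 1))
    (hdR_sq : ∀ a : ΩR, dR (dR a) = 0) (hdS_sq : ∀ b : ΩS, dS (dS b) = 0)
    (hdR_leib : ∀ i : ℕ, ∀ a ∈ 𝒜 i, ∀ b : ΩR,
      dR (a * b) = dR a * b + ((-1 : F) ^ i) • (a * dR b))
    (hdS_leib : ∀ i : ℕ, ∀ a ∈ ℬ i, ∀ b : ΩS,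
      dS (a * b) = dS a * b + ((-1 : F) ^ i) • (a * dS b))
    -- connectedness of `ΩR` and `ΩS`: `ker(d|_R) = F·1`
    (hconnR : ∀ a ∈ 𝒜 0, dR a = 0 → ∃ c : F, a = c • (1 : ΩR))
    (hconnS : ∀ b ∈ ℬ 0, dS b = 0 → ∃ c : F, b = c • (1 : ΩS))
    -- the tensor differential on degree zero:
    -- `d_T(r ⊗ s) = r ⊗ d_S s + d_R r ⊗ s`
    (dT : (ΩR ⊗[F] ΩS) →ₗ[F] (ΩR ⊗[F] ΩS))
    (hdT : ∀ i : ℕ, ∀ ω ∈ 𝒜 i, ∀ ν : ΩS,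
      dT (ω ⊗ₜ[F] ν) = ω ⊗ₜ[F] dS ν + ((-1 : F) ^ i) • (dR ω ⊗ₜ[F] ν)) :
    -- connectedness of `ΩT`
    ∀ x ∈ Submodule.span F
        {x : ΩR ⊗[F] ΩS | ∃ a ∈ 𝒜 0, ∃ b ∈ ℬ 0, x = a ⊗ₜ[F] b},
      dT x = 0 → ∃ c : F, x = c • ((1 : ΩR) ⊗ₜ[F] (1 : ΩS)) := by
  classical
  obtain ⟨πA, hπA_mem, hπA_id, hπA_ne⟩ := stmt3_exists_proj 𝒜 hAint 0
  obtain ⟨πA1, hπA1_mem, hπA1_id, hπA1_ne⟩ := stmt3_exists_proj 𝒜 hAint 1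
  obtain ⟨πB, hπB_mem, hπB_id, hπB_ne⟩ := stmt3_exists_proj ℬ hBint 0
  intro x hx hdx
  -- basic facts about elements of the span, by span induction
  have key : LinearMap.rTensor ΩS πA x = x ∧ LinearMap.lTensor ΩR πB x = x ∧
      dT x = LinearMap.lTensor ΩR dS x + LinearMap.rTensor ΩS dR x ∧
      LinearMap.rTensor ΩS (πA ∘ₗ dR) x = 0 ∧
      LinearMap.lTensor ΩR (πB ∘ₗ dS) x = 0 := by
    clear hdx
    induction hx using Submodule.span_induction with
    | mem y hy =>
      obtain ⟨a, ha, b, hb, rfl⟩ := hy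
      refine ⟨?_, ?_, ?_, ?_, ?_⟩
      · rw [LinearMap.rTensor_tmul, hπA_id a ha]
      · rw [LinearMap.lTensor_tmul, hπB_id b hb]
      · rw [hdT 0 a ha b, LinearMap.lTensor_tmul, LinearMap.rTensor_tmul, pow_zero, one_smul]
      · rw [LinearMap.rTensor_tmul, LinearMap.comp_apply,
          hπA_ne 1 one_ne_zero (dR a) (hdR_deg 0 a ha), TensorProduct.zero_tmul]
      · rw [LinearMap.lTensor_tmul, LinearMap.comp_apply,
          hπB_ne 1 one_ne_zero (dS b) (hdS_deg 0 b hb), TensorProduct.tmul_zero]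
    | zero => simp
    | add y z hy hz ihy ihz =>
      obtain ⟨a1, a2, a3, a4, a5⟩ := ihy
      obtain ⟨b1, b2, b3, b4, b5⟩ := ihz
      refine ⟨?_, ?_, ?_, ?_, ?_⟩ <;> simp [map_add, a1, a2, a3, a4, a5, b1, b2, b3, b4, b5] <;>
        abel
    | smul c y hy ihy =>
      obtain ⟨a1, a2, a3, a4, a5⟩ := ihy
      refine ⟨?_, ?_, ?_, ?_, ?_⟩ <;> simp [map_smul, a1, a2, a3, a4, a5, smul_add]
  obtain ⟨h1, h2, h3, h4, h5⟩ := key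
  rw [h3] at hdx
  -- the two pieces of `dT x` vanish separately
  have hu : LinearMap.lTensor ΩR dS x = 0 := by
    have e1 : LinearMap.rTensor ΩS πA (LinearMap.lTensor ΩR dS x)
        = LinearMap.lTensor ΩR dS x := by
      rw [← LinearMap.comp_apply, LinearMap.rTensor_comp_lTensor,
        ← LinearMap.lTensor_comp_rTensor, LinearMap.comp_apply, h1]
    have e2 : LinearMap.rTensor ΩS πA (LinearMap.rTensor ΩS dR x) = 0 := by
      rw [← LinearMap.comp_apply, ← LinearMap.rTensor_comp, h4]
    have := congrArg (LinearMap.rTensor ΩS πA) hdx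
    rwa [map_add, map_zero, e1, e2, add_zero] at this
  have hv : LinearMap.rTensor ΩS dR x = 0 := by
    have e1 : LinearMap.lTensor ΩR πB (LinearMap.rTensor ΩS dR x)
        = LinearMap.rTensor ΩS dR x := by
      rw [← LinearMap.comp_apply, LinearMap.lTensor_comp_rTensor,
        ← LinearMap.rTensor_comp_lTensor, LinearMap.comp_apply, h2]
    have e2 : LinearMap.lTensor ΩR πB (LinearMap.lTensor ΩR dS x) = 0 := by
      rw [← LinearMap.comp_apply, ← LinearMap.lTensor_comp, h5]
    have := congrArg (LinearMap.lTensor ΩR πB) hdx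
    rwa [map_add, map_zero, e1, e2, zero_add] at this
  -- by flatness of `ΩS`, `x` comes from `ker dR ⊗ ΩS`
  have hexact := Module.Flat.rTensor_exact (M := ΩS) (R := F)
    (LinearMap.exact_subtype_ker_map dR)
  obtain ⟨z, hz⟩ := (hexact x).mp hv
  -- `πA` maps `ker dR` into `span {1}`
  have hcomm : ∀ w : ΩR, dR (πA w) = πA1 (dR w) := by
    intro w
    have hw : w ∈ ⨆ i, 𝒜 i := by rw [hAint.submodule_iSup_eq_top]; trivial
    induction hw using Submodule.iSup_induction' with
    | mem n a ha =>
      by_cases hn : n = 0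
      · subst hn
        rw [hπA_id a ha, hπA1_id (dR a) (hdR_deg 0 a ha)]
      · rw [hπA_ne n hn a ha, map_zero,
          hπA1_ne (n + 1) (by omega) (dR a) (hdR_deg n a ha)]
    | zero => simp
    | add a b _ _ iha ihb => simp only [map_add, iha, ihb]
  have hπ1mem : ∀ k : ΩR, dR k = 0 → πA k ∈ Submodule.span F {(1 : ΩR)} := by
    intro k hk
    obtain ⟨c, hc⟩ := hconnR (πA k) (hπA_mem k) (by rw [hcomm k, hk, map_zero])
    rw [hc]
    exact Submodule.smul_mem _ c (Submodule.mem_span_singleton_self 1)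
  set K := Submodule.span F {(1 : ΩR)} with hK
  let g : (LinearMap.ker dR) →ₗ[F] K :=
    LinearMap.codRestrict K (πA ∘ₗ (LinearMap.ker dR).subtype)
      (fun k => hπ1mem k.1 k.2)
  have hx1 : x = LinearMap.rTensor ΩS K.subtype (LinearMap.rTensor ΩS g z) := by
    have : K.subtype ∘ₗ g = πA ∘ₗ (LinearMap.ker dR).subtype := rfl
    rw [← LinearMap.comp_apply, ← LinearMap.rTensor_comp, this,
      LinearMap.rTensor_comp, LinearMap.comp_apply, hz, h1]
  -- every element of `K ⊗ ΩS` maps to a tensor of the form `1 ⊗ s`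
  have hform : ∀ w : K ⊗[F] ΩS, ∃ s : ΩS,
      LinearMap.rTensor ΩS K.subtype w = (1 : ΩR) ⊗ₜ[F] s := by
    intro w
    induction w using TensorProduct.induction_on with
    | zero => exact ⟨0, by simp⟩
    | tmul a s =>
      obtain ⟨c, hc⟩ := Submodule.mem_span_singleton.mp a.2
      refine ⟨c • s, ?_⟩
      rw [LinearMap.rTensor_tmul, Submodule.coe_subtype, ← hc, TensorProduct.smul_tmul]
    | add u v ihu ihv =>
      obtain ⟨s, hs⟩ := ihu
      obtain ⟨t, ht⟩ := ihv
      exact ⟨s + t, by rw [map_add, hs, ht, TensorProduct.tmul_add]⟩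
  obtain ⟨s, hs⟩ := hform (LinearMap.rTensor ΩS g z)
  have hx2 : x = (1 : ΩR) ⊗ₜ[F] s := hx1.trans hs
  have hx3 : x = (1 : ΩR) ⊗ₜ[F] (πB s) := by
    conv_lhs => rw [← h2, hx2]
    rw [LinearMap.lTensor_tmul]
  have hdt : (1 : ΩR) ⊗ₜ[F] (dS (πB s)) = 0 := by
    have := hu
    rw [hx3, LinearMap.lTensor_tmul] at this
    exact this
  by_cases h1R : (1 : ΩR) = 0
  · exact ⟨0, by rw [hx3, h1R, TensorProduct.zero_tmul, zero_smul]⟩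
  · have : Nontrivial ΩR := nontrivial_of_ne 1 0 h1R
    have hfinj : Function.Injective (Algebra.linearMap F ΩR) := by
      intro a b hab
      exact (algebraMap F ΩR).injective hab
    have hinj := Module.Flat.rTensor_preserves_injective_linearMap (M := ΩS)
      (Algebra.linearMap F ΩR) hfinj
    have h0 : (1 : F) ⊗ₜ[F] (dS (πB s)) = (0 : F ⊗[F] ΩS) := by
      apply hinj
      rw [map_zero, LinearMap.rTensor_tmul]
      simpa using hdt
    have hdst : dS (πB s) = 0 := by
      have := congrArg (TensorProduct.lid F ΩS) h0
      simpa using this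
    obtain ⟨c, hc⟩ := hconnS (πB s) (hπB_mem s) hdst
    exact ⟨c, by rw [hx3, hc, TensorProduct.tmul_smul]⟩
end

section
/- Let (ΩR, d) be an N-dimensional differential calculus on R with volume form 𝗏 and twisting automorphism θ_𝗏, and let σ be a degree-preserving automorphism of ΩR commuting with d whose restriction to R is an algebra automorphism of R. Set u = π_𝗏(σ(𝗏)) ∈ R. Then u is an invertible element of R, and for all a ∈ R, θ_𝗏(σ(a)) u = u σ(θ_𝗏(a)). -/
/-!
STATEMENT 5: Let `(ΩR, d)` be an `N`-dimensional differential calculus on `R` with volume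
form `v` and twisting automorphism `θ_v`, and let `σ` be a degree-preserving automorphism
of `ΩR` commuting with `d`, restricting to an automorphism of `R`.  Set `u = π_v (σ v)`
(i.e. `σ v = v * u`).  Then `u` is invertible in `R` and `θ_v (σ a) * u = u * σ (θ_v a)`
for all `a ∈ R`.

Encoding: `Ω` is a graded `F`-algebra with grading `𝒜`, `R` is the degree-zero part `𝒜 0`.
-/

theorem stmt5 {F Ω : Type*} [Field F] [Ring Ω] [Algebra F Ω]
    (𝒜 : ℕ → Submodule F Ω) (hinternal : DirectSum.IsInternal 𝒜)
    (hone : (1 : Ω) ∈ 𝒜 0)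
    (hmul : ∀ i j : ℕ, ∀ a ∈ 𝒜 i, ∀ b ∈ 𝒜 j, a * b ∈ 𝒜 (i + j))
    (d : Ω →ₗ[F] Ω) (N : ℕ)
    (hd_deg : ∀ n : ℕ, ∀ a ∈ 𝒜 n, d a ∈ 𝒜 (n + 1))
    (hd_sq : ∀ a : Ω, d (d a) = 0)
    (hleibniz : ∀ i : ℕ, ∀ a ∈ 𝒜 i, ∀ b : Ω,
      d (a * b) = d a * b + ((-1 : F) ^ i) • (a * d b))
    (htop : ∀ n : ℕ, N < n → 𝒜 n = ⊥) (hN : 𝒜 N ≠ ⊥)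
    (v : Ω) (hv : v ∈ 𝒜 N)
    (hfree_r : ∀ w ∈ 𝒜 N, ∃! r : Ω, r ∈ 𝒜 0 ∧ w = v * r)
    (hfree_l : ∀ w ∈ 𝒜 N, ∃! r : Ω, r ∈ 𝒜 0 ∧ w = r * v)
    -- `σ` : degree-preserving automorphism of `ΩR` commuting with `d`
    (σ : Ω ≃ₐ[F] Ω)
    (hσdeg : ∀ n : ℕ, ∀ a ∈ 𝒜 n, σ a ∈ 𝒜 n ∧ σ.symm a ∈ 𝒜 n)
    (hσd : ∀ a : Ω, σ (d a) = d (σ a))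
    -- the twisting map `θ_v` of the volume form: `a * v = v * θ a` on `R = 𝒜 0`
    (θ : Ω → Ω) (hθmem : ∀ a ∈ 𝒜 0, θ a ∈ 𝒜 0)
    (hθ : ∀ a ∈ 𝒜 0, a * v = v * θ a)
    -- `u = π_v (σ v)`, i.e. `σ v = v * u`
    (u : Ω) (humem : u ∈ 𝒜 0) (hu : σ v = v * u) :
    (∃ w ∈ 𝒜 0, u * w = 1 ∧ w * u = 1) ∧
      (∀ a ∈ 𝒜 0, θ (σ a) * u = u * σ (θ a)) := by
  -- cancellation: if r, s ∈ 𝒜 0 and v * r = v * s then r = s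
  have hcancel : ∀ r ∈ 𝒜 0, ∀ s ∈ 𝒜 0, v * r = v * s → r = s := by
    intro r hr s hs h
    have hmem : v * r ∈ 𝒜 N := by
      have := hmul N 0 v hv r hr
      simpa using this
    obtain ⟨x, _, hx⟩ := hfree_r (v * r) hmem
    have h1 := hx r ⟨hr, rfl⟩
    have h2 := hx s ⟨hs, h⟩
    rw [h1, h2]
  constructor
  · -- invertibility of u
    have hσv : σ.symm v ∈ 𝒜 N := (hσdeg N v hv).2
    obtain ⟨w', ⟨hw'mem, hw'⟩, _⟩ := hfree_r (σ.symm v) hσv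
    refine ⟨σ w', (hσdeg 0 w' hw'mem).1, ?_, ?_⟩
    · -- u * σ w' = 1
      have h1 : v = σ (v * w') := by rw [← hw']; simp
      have h2 : v * (u * σ w') = v * 1 := by
        rw [mul_one]
        rw [map_mul, hu] at h1
        rw [← mul_assoc, ← h1]
      exact hcancel _ (by simpa using hmul 0 0 u humem (σ w') ((hσdeg 0 w' hw'mem).1)) 1 hone h2
    · -- σ w' * u = 1
      have h1 : v = σ.symm (v * u) := by rw [← hu]; simp
      rw [map_mul] at h1
      have h2 : v * (w' * σ.symm u) = v * 1 := by
        rw [mul_one, ← mul_assoc, ← hw', ← h1]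
      have h3 : w' * σ.symm u = 1 :=
        hcancel _ (by simpa using hmul 0 0 w' hw'mem (σ.symm u) ((hσdeg 0 u humem).2)) 1 hone h2
      have := congrArg σ h3
      simpa using this
  · intro a ha
    have h1 : σ a * σ v = σ v * σ (θ a) := by
      rw [← map_mul, ← map_mul, hθ a ha]
    rw [hu] at h1
    have h2 : σ a * v = v * θ (σ a) := hθ (σ a) ((hσdeg 0 a ha).1)
    have h3 : v * (θ (σ a) * u) = v * (u * σ (θ a)) := by
      rw [← mul_assoc, ← h2, mul_assoc, h1, mul_assoc]
    exact hcancel _ (by simpa using hmul 0 0 (θ (σ a)) (hθmem (σ a) ((hσdeg 0 a ha).1)) u humem)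
      _ (by simpa using hmul 0 0 u humem (σ (θ a)) ((hσdeg 0 (θ a) (hθmem a ha)).1)) h3
end

section
/- Let R ⊆ S be a ring extension, σ ∈ Aut(S) restricting to an automorphism of R, and M a σ-stable right R-submodule of S (σ(M) ⊆ M). Consider the skew polynomial rings S[z;σ] ⊇ R[z;σ] and the right R[z;σ]-submodule M[z] = ⊕_{n≥0} M z^n of S[z;σ]. Then the map ψ sending f z^k ∈ Hom_R(M,R)[z] to the map m z^i ↦ σ^k(f(m)) z^{k+i} is a well-defined injective additive map from Hom_R(M,R)[z] to Hom_{R[z;σ]}(M[z], R[z;σ]), and each ψ_{fz^k} is right R[z;σ]-linear. -/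
/-!
The skew relation `z^k ι(s) = ι(σ^k s) z^k` rewrites `Ψ` as `Σ_k z^k · f̂_k`, where
`f̂_k = mapCoeffs ι z coeff (f k)` applies `f_k` to every coefficient. Each `f̂_k` is additive
on `M[z]`, and it is right `R[z;σ]`-linear: right multiplication by `r z^n` moves the
coefficient `m` at `z^i` to `m σ^i(r)` at `z^{i+n}`, and `f_k` is right `R`-linear on `M`.
For injectivity, the coefficient of `Ψ(m)` at `z^k` is `σ^k(f_k m)`.
-/

open Finset

structure IsSkewPolynomialRing {S T : Type*} [Ring S] [Ring T] (σ : RingAut S) (ι : S →+* T)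
    (z : T) (coeff : T → ℕ →₀ S) : Prop where
  z_mul : ∀ s : S, z * ι s = ι (σ s) * z
  eq_sum : ∀ t : T, t = (coeff t).sum fun i s => ι s * z ^ i
  coeff_sum : ∀ c : ℕ →₀ S, coeff (c.sum fun i s => ι s * z ^ i) = c

lemma RingAut.pow_apply_mem {S : Type*} [Ring S] {σ : RingAut S} {A : Set S}
    (hA : ∀ s ∈ A, σ s ∈ A) (k : ℕ) {s : S} (hs : s ∈ A) : (σ ^ k) s ∈ A := by
  rw [RingAut.coe_pow]
  exact Set.MapsTo.iterate hA k hs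

lemma map_zero_of_map_add_on {S : Type*} [AddGroup S] {M : AddSubgroup S} {g : S → S}
    (hg : ∀ m ∈ M, ∀ m' ∈ M, g (m + m') = g m + g m') : g 0 = 0 := by
  simpa using hg 0 M.zero_mem 0 M.zero_mem

def mapCoeffs {S T : Type*} [Ring S] [Ring T] (ι : S →+* T) (z : T) (coeff : T → ℕ →₀ S)
    (g : S → S) (t : T) : T :=
  (coeff t).sum fun i s => ι (g s) * z ^ i

lemma mapCoeffs_eq_sum_of_support_subset {S T : Type*} [Ring S] [Ring T] {ι : S →+* T} {z : T}
    {coeff : T → ℕ →₀ S} {g : S → S} (hg : g 0 = 0) {t : T} {E : Finset ℕ}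
    (hE : (coeff t).support ⊆ E) : mapCoeffs ι z coeff g t = ∑ i ∈ E, ι (g (coeff t i)) * z ^ i :=
  Finsupp.sum_of_support_subset _ hE _ fun i _ => by simp [hg]

namespace IsSkewPolynomialRing

variable {S T : Type*} [Ring S] [Ring T] {σ : RingAut S} {ι : S →+* T} {z : T}
  {coeff : T → ℕ →₀ S}

noncomputable def coeffEquiv (h : IsSkewPolynomialRing σ ι z coeff) : T ≃+ (ℕ →₀ S) :=
  AddEquiv.symm
    { Finsupp.liftAddHom fun i => (AddMonoidHom.mulRight (z ^ i)).comp ι.toAddMonoidHom with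
      invFun := coeff
      left_inv := h.coeff_sum
      right_inv := fun t => (h.eq_sum t).symm }

lemma coeffEquiv_apply (h : IsSkewPolynomialRing σ ι z coeff) (t : T) :
    h.coeffEquiv t = coeff t := rfl

lemma coeff_zero (h : IsSkewPolynomialRing σ ι z coeff) : coeff 0 = 0 :=
  map_zero h.coeffEquiv

lemma coeff_monomial (h : IsSkewPolynomialRing σ ι z coeff) (s : S) (n : ℕ) :
    coeff (ι s * z ^ n) = Finsupp.single n s := by
  simpa [Finsupp.sum_single_index] using h.coeff_sum (Finsupp.single n s)

lemma coeff_ι (h : IsSkewPolynomialRing σ ι z coeff) (s : S) :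
    coeff (ι s) = Finsupp.single 0 s := by
  simpa using h.coeff_monomial s 0

lemma coeff_sum_monomial (h : IsSkewPolynomialRing σ ι z coeff) (D : Finset ℕ) (a : ℕ → S)
    (k : ℕ) : coeff (∑ j ∈ D, ι (a j) * z ^ j) k = if k ∈ D then a k else 0 := by
  rw [← h.coeffEquiv_apply, map_sum, Finsupp.finsetSum_apply]
  simp only [h.coeffEquiv_apply, h.coeff_monomial, Finsupp.single_apply, sum_ite_eq']

lemma z_pow_mul (h : IsSkewPolynomialRing σ ι z coeff) (i : ℕ) (s : S) :
    z ^ i * ι s = ι ((σ ^ i) s) * z ^ i := by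
  induction i generalizing s with
  | zero => simp
  | succ i ih =>
    rw [pow_succ, mul_assoc, h.z_mul, ← mul_assoc, ih, mul_assoc, ← pow_succ, pow_succ σ]
    rfl

lemma monomial_mul_monomial (h : IsSkewPolynomialRing σ ι z coeff) (u r : S) (p n : ℕ) :
    ι u * z ^ p * (ι r * z ^ n) = ι (u * (σ ^ p) r) * z ^ (p + n) := by
  rw [← mul_assoc, mul_assoc (ι u), h.z_pow_mul, ← mul_assoc, ← map_mul, mul_assoc, ← pow_add]

lemma mul_monomial (h : IsSkewPolynomialRing σ ι z coeff) (t : T) (r : S) (n : ℕ) :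
    t * (ι r * z ^ n) = (coeff t).sum fun i c => ι (c * (σ ^ i) r) * z ^ (i + n) := by
  conv_lhs => rw [h.eq_sum t]
  rw [Finsupp.sum, sum_mul]
  exact sum_congr rfl fun i _ => h.monomial_mul_monomial _ _ _ _

/-- `A[z]`: the skew polynomials with all coefficients in `A`. -/
def polyOver (h : IsSkewPolynomialRing σ ι z coeff) (A : AddSubgroup S) : AddSubgroup T where
  carrier := {t | ∀ i, coeff t i ∈ A}
  add_mem' {t t'} ht ht' i := by
    rw [← h.coeffEquiv_apply, map_add]
    exact A.add_mem (ht i) (ht' i)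
  zero_mem' i := by
    rw [← h.coeffEquiv_apply, map_zero]
    exact A.zero_mem
  neg_mem' {t} ht i := by
    rw [← h.coeffEquiv_apply, map_neg]
    exact A.neg_mem (ht i)

lemma monomial_mem_polyOver (h : IsSkewPolynomialRing σ ι z coeff) {A : AddSubgroup S} {s : S}
    (hs : s ∈ A) (n : ℕ) : ι s * z ^ n ∈ h.polyOver A := by
  intro i
  rw [h.coeff_monomial, Finsupp.single_apply]
  split_ifs
  exacts [hs, A.zero_mem]

lemma ι_mem_polyOver (h : IsSkewPolynomialRing σ ι z coeff) {A : AddSubgroup S} {s : S}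
    (hs : s ∈ A) : ι s ∈ h.polyOver A := by
  simpa using h.monomial_mem_polyOver hs 0

lemma mapCoeffs_monomial (h : IsSkewPolynomialRing σ ι z coeff) {g : S → S} (hg : g 0 = 0)
    (s : S) (n : ℕ) : mapCoeffs ι z coeff g (ι s * z ^ n) = ι (g s) * z ^ n := by
  rw [mapCoeffs, h.coeff_monomial, Finsupp.sum_single_index (by simp [hg])]

section AdditiveOn

variable {M : AddSubgroup S} {g : S → S}

lemma mapCoeffs_add (h : IsSkewPolynomialRing σ ι z coeff)
    (hg : ∀ m ∈ M, ∀ m' ∈ M, g (m + m') = g m + g m') {t t' : T} (ht : t ∈ h.polyOver M)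
    (ht' : t' ∈ h.polyOver M) :
    mapCoeffs ι z coeff g (t + t') = mapCoeffs ι z coeff g t + mapCoeffs ι z coeff g t' := by
  have hg0 := map_zero_of_map_add_on hg
  have hcoeff : coeff (t + t') = coeff t + coeff t' := map_add h.coeffEquiv t t'
  have hE : (coeff (t + t')).support ⊆ (coeff t).support ∪ (coeff t').support :=
    hcoeff ▸ Finsupp.support_add
  rw [mapCoeffs_eq_sum_of_support_subset hg0 hE,
    mapCoeffs_eq_sum_of_support_subset hg0 subset_union_left,
    mapCoeffs_eq_sum_of_support_subset hg0 subset_union_right, ← sum_add_distrib]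
  refine sum_congr rfl fun i _ => ?_
  rw [hcoeff, Finsupp.add_apply, hg _ (ht i) _ (ht' i), map_add, add_mul]

lemma mapCoeffs_sum (h : IsSkewPolynomialRing σ ι z coeff)
    (hg : ∀ m ∈ M, ∀ m' ∈ M, g (m + m') = g m + g m') {ι' : Type*} (E : Finset ι') {u : ι' → T}
    (hu : ∀ j ∈ E, u j ∈ h.polyOver M) :
    mapCoeffs ι z coeff g (∑ j ∈ E, u j) = ∑ j ∈ E, mapCoeffs ι z coeff g (u j) := by
  classical
  induction E using Finset.induction_on with
  | empty =>
    rw [sum_empty, sum_empty, mapCoeffs, h.coeff_zero, Finsupp.sum_zero_index]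
  | insert j E hj ih =>
    rw [sum_insert hj, sum_insert hj, h.mapCoeffs_add hg (hu j (mem_insert_self j E))
      (sum_mem fun i hi => hu i (mem_insert_of_mem hi)),
      ih fun i hi => hu i (mem_insert_of_mem hi)]

variable {R : Subring S}

lemma mul_monomial_mem_polyOver (h : IsSkewPolynomialRing σ ι z coeff)
    (hσR : ∀ s ∈ R, σ s ∈ R) (hMR : ∀ m ∈ M, ∀ r ∈ R, m * r ∈ M) {t : T}
    (ht : t ∈ h.polyOver M) {r : S} (hr : r ∈ R) (n : ℕ) : t * (ι r * z ^ n) ∈ h.polyOver M := by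
  rw [h.mul_monomial, Finsupp.sum]
  exact sum_mem fun i _ =>
    h.monomial_mem_polyOver (hMR _ (ht i) _ (RingAut.pow_apply_mem hσR i hr)) _

lemma mapCoeffs_mul_monomial (h : IsSkewPolynomialRing σ ι z coeff)
    (hσR : ∀ s ∈ R, σ s ∈ R) (hMR : ∀ m ∈ M, ∀ r ∈ R, m * r ∈ M)
    (hg : ∀ m ∈ M, ∀ m' ∈ M, g (m + m') = g m + g m')
    (hglin : ∀ m ∈ M, ∀ r ∈ R, g (m * r) = g m * r) {t : T} (ht : t ∈ h.polyOver M) {r : S}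
    (hr : r ∈ R) (n : ℕ) :
    mapCoeffs ι z coeff g (t * (ι r * z ^ n)) = mapCoeffs ι z coeff g t * (ι r * z ^ n) := by
  have hσr (i : ℕ) : (σ ^ i) r ∈ R := RingAut.pow_apply_mem hσR i hr
  rw [h.mul_monomial, Finsupp.sum,
    h.mapCoeffs_sum hg _ fun i _ => h.monomial_mem_polyOver (hMR _ (ht i) _ (hσr i)) _,
    mapCoeffs, Finsupp.sum, sum_mul]
  refine sum_congr rfl fun i _ => ?_
  rw [h.mapCoeffs_monomial (map_zero_of_map_add_on hg), hglin _ (ht i) _ (hσr i),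
    h.monomial_mul_monomial]

lemma mapCoeffs_mul (h : IsSkewPolynomialRing σ ι z coeff)
    (hσR : ∀ s ∈ R, σ s ∈ R) (hMR : ∀ m ∈ M, ∀ r ∈ R, m * r ∈ M)
    (hg : ∀ m ∈ M, ∀ m' ∈ M, g (m + m') = g m + g m')
    (hglin : ∀ m ∈ M, ∀ r ∈ R, g (m * r) = g m * r) {t : T} (ht : t ∈ h.polyOver M) {a : T}
    (ha : a ∈ h.polyOver R.toAddSubgroup) :
    mapCoeffs ι z coeff g (t * a) = mapCoeffs ι z coeff g t * a := by
  rw [h.eq_sum a, Finsupp.sum, mul_sum, mul_sum,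
    h.mapCoeffs_sum hg _ fun n _ => h.mul_monomial_mem_polyOver hσR hMR ht (ha n) n]
  exact sum_congr rfl fun n _ => h.mapCoeffs_mul_monomial hσR hMR hg hglin ht (ha n) n

end AdditiveOn

lemma pow_mul_mapCoeffs (h : IsSkewPolynomialRing σ ι z coeff) (g : S → S) (k : ℕ) (t : T) :
    z ^ k * mapCoeffs ι z coeff g t =
      (coeff t).sum fun i m => ι ((σ ^ k) (g m)) * z ^ (k + i) := by
  rw [mapCoeffs, Finsupp.sum, Finsupp.sum, mul_sum]
  refine sum_congr rfl fun i _ => ?_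
  rw [← mul_assoc, h.z_pow_mul, mul_assoc, pow_add]

end IsSkewPolynomialRing

theorem stmt8_general {S T : Type*} [Ring S] [Ring T] (R : Subring S) (σ : RingAut S)
    (hσR : ∀ s : S, s ∈ R ↔ σ s ∈ R)
    (M : AddSubgroup S)
    (hMR : ∀ m ∈ M, ∀ r ∈ R, m * r ∈ M)
    (ι : S →+* T) (z : T)
    (hcomm : ∀ s : S, z * ι s = ι (σ s) * z)
    (coeff : T → (ℕ →₀ S))
    (hco1 : ∀ t : T, t = (coeff t).sum fun i s => ι s * z ^ i)
    (hco2 : ∀ c : ℕ →₀ S, coeff (c.sum fun i s => ι s * z ^ i) = c)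
    -- an element `Σ_{k ∈ D} f_k z^k` of `Hom_R(M,R)[z]`
    (D : Finset ℕ) (f : ℕ → S → S)
    (hf0 : ∀ k ∉ D, ∀ m ∈ M, f k m = 0)
    (hfadd : ∀ k : ℕ, ∀ m ∈ M, ∀ m' ∈ M, f k (m + m') = f k m + f k m')
    (hfR : ∀ k : ℕ, ∀ m ∈ M, f k m ∈ R)
    (hflin : ∀ k : ℕ, ∀ m ∈ M, ∀ r ∈ R, f k (m * r) = f k m * r)
    -- `Ψ = ψ(Σ_{k ∈ D} f_k z^k)`
    (Ψ : T → T)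
    (hΨ : ∀ t : T,
      Ψ t = ∑ k ∈ D, (coeff t).sum fun i m => ι ((σ ^ k) (f k m)) * z ^ (k + i)) :
    -- `Ψ` is additive on `M[z]`
    (∀ t t' : T, (∀ i, coeff t i ∈ M) → (∀ i, coeff t' i ∈ M) →
      Ψ (t + t') = Ψ t + Ψ t') ∧
    -- `Ψ` takes values in `R[z;σ]`
    (∀ t : T, (∀ i, coeff t i ∈ M) → ∀ j : ℕ, coeff (Ψ t) j ∈ R) ∧
    -- `Ψ` is right `R[z;σ]`-linear
    (∀ t : T, (∀ i, coeff t i ∈ M) → ∀ a : T, (∀ i, coeff a i ∈ R) →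
      Ψ (t * a) = Ψ t * a) ∧
    -- `ψ` is injective: if `Ψ` vanishes on `M[z]` then all `f_k` vanish on `M`
    ((∀ t : T, (∀ i, coeff t i ∈ M) → Ψ t = 0) → ∀ k : ℕ, ∀ m ∈ M, f k m = 0) := by
  have h : IsSkewPolynomialRing σ ι z coeff := ⟨hcomm, hco1, hco2⟩
  have hσR_mem : ∀ s ∈ R, σ s ∈ R := fun s => (hσR s).mp
  have hΨ' (t : T) : Ψ t = ∑ k ∈ D, z ^ k * mapCoeffs ι z coeff (f k) t := by
    simp only [hΨ, h.pow_mul_mapCoeffs]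
  refine ⟨fun t t' ht ht' => ?_, fun t ht => ?_, fun t ht a ha => ?_, fun hker k m hm => ?_⟩
  · simp only [hΨ', h.mapCoeffs_add (hfadd _) ht ht', mul_add, sum_add_distrib]
  · show Ψ t ∈ h.polyOver R.toAddSubgroup
    rw [hΨ]
    exact sum_mem fun k _ => sum_mem fun i _ =>
      h.monomial_mem_polyOver (RingAut.pow_apply_mem hσR_mem k (hfR k _ (ht i))) _
  · rw [hΨ', hΨ', sum_mul]
    refine sum_congr rfl fun k _ => ?_
    rw [h.mapCoeffs_mul hσR_mem hMR (hfadd k) (hflin k) ht ha, mul_assoc]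
  · by_cases hk : k ∈ D
    · have hΨι := congrArg (coeff · k) (hker (ι m) (h.ι_mem_polyOver hm))
      simp only [hΨ, h.coeff_ι, Finsupp.sum_single_index, add_zero, h.coeff_sum_monomial,
        if_pos hk, h.coeff_zero, map_zero_of_map_add_on (hfadd _), map_zero, zero_mul] at hΨι
      exact (σ ^ k).injective (hΨι.trans (map_zero _).symm)
    · exact hf0 k hk m hm

theorem stmt8 {S T : Type*} [Ring S] [Ring T] (R : Subring S) (σ : RingAut S)
    (hσR : ∀ s : S, s ∈ R ↔ σ s ∈ R)
    (M : AddSubgroup S)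
    (hMR : ∀ m ∈ M, ∀ r ∈ R, m * r ∈ M)
    (hMσ : ∀ m ∈ M, σ m ∈ M)
    (ι : S →+* T) (z : T)
    (hcomm : ∀ s : S, z * ι s = ι (σ s) * z)
    (coeff : T → (ℕ →₀ S))
    (hco1 : ∀ t : T, t = (coeff t).sum fun i s => ι s * z ^ i)
    (hco2 : ∀ c : ℕ →₀ S, coeff (c.sum fun i s => ι s * z ^ i) = c)
    -- an element `Σ_{k ∈ D} f_k z^k` of `Hom_R(M,R)[z]`
    (D : Finset ℕ) (f : ℕ → S → S)
    (hf0 : ∀ k ∉ D, ∀ m ∈ M, f k m = 0)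
    (hfadd : ∀ k : ℕ, ∀ m ∈ M, ∀ m' ∈ M, f k (m + m') = f k m + f k m')
    (hfR : ∀ k : ℕ, ∀ m ∈ M, f k m ∈ R)
    (hflin : ∀ k : ℕ, ∀ m ∈ M, ∀ r ∈ R, f k (m * r) = f k m * r)
    -- `Ψ = ψ(Σ_{k ∈ D} f_k z^k)`
    (Ψ : T → T)
    (hΨ : ∀ t : T,
      Ψ t = ∑ k ∈ D, (coeff t).sum fun i m => ι ((σ ^ k) (f k m)) * z ^ (k + i)) :
    -- `Ψ` is additive on `M[z]`
    (∀ t t' : T, (∀ i, coeff t i ∈ M) → (∀ i, coeff t' i ∈ M) →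
      Ψ (t + t') = Ψ t + Ψ t') ∧
    -- `Ψ` takes values in `R[z;σ]`
    (∀ t : T, (∀ i, coeff t i ∈ M) → ∀ j : ℕ, coeff (Ψ t) j ∈ R) ∧
    -- `Ψ` is right `R[z;σ]`-linear
    (∀ t : T, (∀ i, coeff t i ∈ M) → ∀ a : T, (∀ i, coeff a i ∈ R) →
      Ψ (t * a) = Ψ t * a) ∧
    -- `ψ` is injective: if `Ψ` vanishes on `M[z]` then all `f_k` vanish on `M`
    ((∀ t : T, (∀ i, coeff t i ∈ M) → Ψ t = 0) → ∀ k : ℕ, ∀ m ∈ M, f k m = 0) :=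
  stmt8_general R σ hσR M hMR ι z hcomm coeff hco1 hco2 D f hf0 hfadd hfR hflin Ψ hΨ
end

section
/- In the setting of the previous lemma, if additionally M is a finitely generated right R-module and σ(M) = M, then the map ψ : Hom_R(M,R)[z] → Hom_{R[z;σ]}(M[z], R[z;σ]), f z^k ↦ [m z^i ↦ σ^k(f(m)) z^{k+i}], is bijective. -/
/-!
Everything is read off coefficients. Right `R[z;σ]`-linearity of `φ : M[z] → R[z;σ]` gives
`φ(Σ mᵢ zⁱ) = Σ φ(mᵢ) zⁱ`, so `φ` is determined by its restriction to `M`, and the `k`-th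
coefficient of `φ(m)`, untwisted by `σ^{-k}`, is a right `R`-linear map `f_k : M → R` (this is
the projection `p_k ∘ φ`). Since `φ(Σ bⱼ λⱼ) = Σ φ(bⱼ) λⱼ` and right multiplication by a constant
does not enlarge supports, only the finitely many degrees occurring in the `φ(bⱼ)` carry a
non-zero `f_k`, and then `φ = ψ(Σ f_k z^k)`. Injectivity: `ψ(Σ f_k z^k)(m) = Σ σ^k(f_k(m)) z^k`
has `k`-th coefficient `σ^k(f_k(m))`.
-/

structure IsSkewPresentation {S T : Type*} [Semiring S] [Semiring T] (σ : RingAut S)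
    (ι : S →+* T) (z : T) (coeff : T → ℕ →₀ S) : Prop where
  mul_comm : ∀ s : S, z * ι s = ι (σ s) * z
  eq_sum : ∀ t : T, t = (coeff t).sum fun i s => ι s * z ^ i
  coeff_sum : ∀ c : ℕ →₀ S, coeff (c.sum fun i s => ι s * z ^ i) = c

def skewPsi {S T : Type*} [Semiring S] [Semiring T] (σ : RingAut S) (ι : S →+* T) (z : T)
    (coeff : T → ℕ →₀ S) (D : Finset ℕ) (f : ℕ → S → S) (t : T) : T :=
  ∑ k ∈ D, (coeff t).sum fun i m => ι ((σ ^ k) (f k m)) * z ^ (k + i)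

lemma Subring.mem_iff_pow_apply_mem {S : Type*} [Ring S] {R : Subring S} {σ : RingAut S}
    (h : ∀ s : S, s ∈ R ↔ σ s ∈ R) (k : ℕ) (s : S) : s ∈ R ↔ (σ ^ k) s ∈ R := by
  induction k generalizing s with
  | zero => rfl
  | succ k ih => rw [pow_succ, RingAut.mul_apply, ← ih, ← h]

lemma map_finset_sum_of_add {A B : Type*} [AddCommGroup A] [AddCommGroup B] {N : AddSubgroup A}
    {φ : A → B} (hadd : ∀ x ∈ N, ∀ y ∈ N, φ (x + y) = φ x + φ y) {α : Type*} (s : Finset α)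
    {g : α → A} (hg : ∀ a ∈ s, g a ∈ N) : φ (∑ a ∈ s, g a) = ∑ a ∈ s, φ (g a) := by
  induction s using Finset.cons_induction with
  | empty =>
    simpa using hadd 0 N.zero_mem 0 N.zero_mem
  | cons a s ha ih =>
    have hs : ∀ b ∈ s, g b ∈ N := fun b hb => hg b (Finset.mem_cons_of_mem hb)
    rw [Finset.sum_cons, Finset.sum_cons,
      hadd _ (hg a (Finset.mem_cons_self a s)) _ (N.sum_mem hs), ih hs]

namespace IsSkewPresentation

section Semiring

variable {S T : Type*} [Semiring S] [Semiring T] {σ : RingAut S} {ι : S →+* T} {z : T}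
  {coeff : T → ℕ →₀ S}

lemma pow_mul (P : IsSkewPresentation σ ι z coeff) (j : ℕ) (s : S) :
    z ^ j * ι s = ι ((σ ^ j) s) * z ^ j := by
  induction j generalizing s with
  | zero => simp
  | succ j ih =>
    rw [pow_succ, mul_assoc, P.mul_comm, ← mul_assoc, ih, mul_assoc, ← pow_succ, pow_succ σ,
      RingAut.mul_apply]

lemma coeff_zero (P : IsSkewPresentation σ ι z coeff) : coeff 0 = 0 := by
  simpa using P.coeff_sum 0

lemma coeff_add (P : IsSkewPresentation σ ι z coeff) (t t' : T) :
    coeff (t + t') = coeff t + coeff t' := by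
  conv_lhs => rw [P.eq_sum t, P.eq_sum t', ← Finsupp.sum_add_index' (fun _ => by simp)
    (fun _ _ _ => by rw [map_add, add_mul])]
  exact P.coeff_sum _

def coeffHom (P : IsSkewPresentation σ ι z coeff) : T →+ (ℕ →₀ S) where
  toFun := coeff
  map_zero' := P.coeff_zero
  map_add' := P.coeff_add

lemma coeff_finset_sum (P : IsSkewPresentation σ ι z coeff) {α : Type*} (s : Finset α)
    (g : α → T) : coeff (∑ a ∈ s, g a) = ∑ a ∈ s, coeff (g a) :=
  map_sum P.coeffHom g s

lemma coeff_monomial (P : IsSkewPresentation σ ι z coeff) (i : ℕ) (s : S) :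
    coeff (ι s * z ^ i) = Finsupp.single i s := by
  simpa using P.coeff_sum (Finsupp.single i s)

lemma coeff_finset_sum_monomial (P : IsSkewPresentation σ ι z coeff) (D : Finset ℕ)
    (a : ℕ → S) (k : ℕ) : coeff (∑ j ∈ D, ι (a j) * z ^ j) k = if k ∈ D then a k else 0 := by
  rw [P.coeff_finset_sum, Finset.sum_apply']
  simp [P.coeff_monomial, Finsupp.single_apply]

lemma eq_sum_of_support_subset (P : IsSkewPresentation σ ι z coeff) {t : T} {D : Finset ℕ}
    (hD : (coeff t).support ⊆ D) : t = ∑ k ∈ D, ι (coeff t k) * z ^ k := by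
  conv_lhs => rw [P.eq_sum t]
  exact Finsupp.sum_of_support_subset _ hD _ fun k _ => by simp

lemma coeff_mul_ι (P : IsSkewPresentation σ ι z coeff) (t : T) (r : S) (k : ℕ) :
    coeff (t * ι r) k = coeff t k * (σ ^ k) r := by
  have h : t * ι r = ∑ j ∈ (coeff t).support, ι (coeff t j * (σ ^ j) r) * z ^ j := by
    conv_lhs => rw [P.eq_sum t]
    rw [Finsupp.sum, Finset.sum_mul]
    refine Finset.sum_congr rfl fun j _ => ?_
    rw [mul_assoc, P.pow_mul, ← mul_assoc, map_mul]
  rw [h, P.coeff_finset_sum_monomial]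
  split_ifs with hk
  · rfl
  · rw [Finsupp.notMem_support_iff.mp hk, zero_mul]

lemma skewPsi_ι (P : IsSkewPresentation σ ι z coeff) {D : Finset ℕ} {f : ℕ → S → S}
    (hf0 : ∀ k, f k 0 = 0) (m : S) :
    skewPsi σ ι z coeff D f (ι m) = ∑ k ∈ D, ι ((σ ^ k) (f k m)) * z ^ k := by
  have hm : coeff (ι m) = Finsupp.single 0 m := by simpa using P.coeff_monomial 0 m
  simp only [skewPsi, hm]
  exact Finset.sum_congr rfl fun k _ => by rw [Finsupp.sum_single_index (by simp [hf0]), add_zero]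

lemma eq_zero_of_skewPsi_ι_eq_zero (P : IsSkewPresentation σ ι z coeff) {D : Finset ℕ}
    {f : ℕ → S → S} (hf0 : ∀ k, f k 0 = 0) {m : S} (h : skewPsi σ ι z coeff D f (ι m) = 0)
    {k : ℕ} (hk : k ∈ D) : f k m = 0 := by
  have hcoeff := congrArg (fun t => coeff t k) h
  simp only [P.skewPsi_ι hf0, P.coeff_finset_sum_monomial, if_pos hk, P.coeff_zero,
    Finsupp.coe_zero, Pi.zero_apply] at hcoeff
  exact (map_eq_zero_iff _ (σ ^ k).injective).mp hcoeff

end Semiring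

section Ring

variable {S T : Type*} [Ring S] [Ring T] {σ : RingAut S} {ι : S →+* T} {z : T}
  {coeff : T → ℕ →₀ S}

/-- `P.coeffIn M` is `M[z]`. -/
def coeffIn (P : IsSkewPresentation σ ι z coeff) (M : AddSubgroup S) : AddSubgroup T where
  carrier := {t | ∀ i, coeff t i ∈ M}
  add_mem' {a b} ha hb i := by
    rw [P.coeff_add, Finsupp.add_apply]
    exact M.add_mem (ha i) (hb i)
  zero_mem' i := by
    rw [P.coeff_zero]
    exact M.zero_mem
  neg_mem' {a} ha i := by
    rw [show coeff (-a) = -coeff a from map_neg P.coeffHom a, Finsupp.neg_apply]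
    exact M.neg_mem (ha i)

lemma monomial_mem_coeffIn (P : IsSkewPresentation σ ι z coeff) {M : AddSubgroup S} {m : S}
    (hm : m ∈ M) (i : ℕ) : ι m * z ^ i ∈ P.coeffIn M := by
  intro j
  rw [P.coeff_monomial, Finsupp.single_apply]
  split_ifs
  exacts [hm, M.zero_mem]

lemma ι_mem_coeffIn (P : IsSkewPresentation σ ι z coeff) {M : AddSubgroup S} {m : S}
    (hm : m ∈ M) : ι m ∈ P.coeffIn M := by
  simpa using P.monomial_mem_coeffIn hm 0

variable {M : AddSubgroup S} {R : Subring S} {φ : T → T}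

lemma map_eq_sum_map_ι_mul (P : IsSkewPresentation σ ι z coeff)
    (hadd : ∀ t ∈ P.coeffIn M, ∀ t' ∈ P.coeffIn M, φ (t + t') = φ t + φ t')
    (hlin : ∀ t ∈ P.coeffIn M, ∀ a ∈ P.coeffIn R.toAddSubgroup, φ (t * a) = φ t * a)
    {t : T} (ht : t ∈ P.coeffIn M) :
    φ t = ∑ i ∈ (coeff t).support, φ (ι (coeff t i)) * z ^ i := by
  conv_lhs => rw [P.eq_sum t]
  rw [Finsupp.sum, map_finset_sum_of_add hadd _ fun i _ => P.monomial_mem_coeffIn (ht i) i]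
  refine Finset.sum_congr rfl fun i _ => hlin _ (P.ι_mem_coeffIn (ht i)) _ ?_
  simpa using P.monomial_mem_coeffIn (M := R.toAddSubgroup) R.one_mem i

lemma support_coeff_map_ι_subset (P : IsSkewPresentation σ ι z coeff)
    (hadd : ∀ t ∈ P.coeffIn M, ∀ t' ∈ P.coeffIn M, φ (t + t') = φ t + φ t')
    (hlin : ∀ t ∈ P.coeffIn M, ∀ a ∈ P.coeffIn R.toAddSubgroup, φ (t * a) = φ t * a)
    (hMR : ∀ m ∈ M, ∀ r ∈ R, m * r ∈ M) {n : ℕ} {b : Fin n → S} (hb : ∀ j, b j ∈ M)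
    {lam : Fin n → S} (hlam : ∀ j, lam j ∈ R) :
    (coeff (φ (ι (∑ j, b j * lam j)))).support ⊆
      Finset.univ.biUnion fun j => (coeff (φ (ι (b j)))).support := by
  have hφ : φ (ι (∑ j, b j * lam j)) = ∑ j, φ (ι (b j)) * ι (lam j) := by
    rw [map_sum, map_finset_sum_of_add hadd _
      fun j _ => P.ι_mem_coeffIn (hMR _ (hb j) _ (hlam j))]
    refine Finset.sum_congr rfl fun j _ => ?_
    rw [map_mul]
    exact hlin _ (P.ι_mem_coeffIn (hb j)) _ (P.ι_mem_coeffIn (M := R.toAddSubgroup) (hlam j))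
  intro k hk
  rw [Finsupp.mem_support_iff, hφ, P.coeff_finset_sum, Finset.sum_apply'] at hk
  obtain ⟨j, -, hj⟩ := Finset.exists_ne_zero_of_sum_ne_zero hk
  rw [P.coeff_mul_ι] at hj
  exact Finset.mem_biUnion.mpr
    ⟨j, Finset.mem_univ j, Finsupp.mem_support_iff.mpr (left_ne_zero_of_mul hj)⟩

lemma map_eq_skewPsi (P : IsSkewPresentation σ ι z coeff)
    (hadd : ∀ t ∈ P.coeffIn M, ∀ t' ∈ P.coeffIn M, φ (t + t') = φ t + φ t')
    (hlin : ∀ t ∈ P.coeffIn M, ∀ a ∈ P.coeffIn R.toAddSubgroup, φ (t * a) = φ t * a)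
    {D : Finset ℕ} (hD : ∀ m ∈ M, (coeff (φ (ι m))).support ⊆ D) {t : T}
    (ht : t ∈ P.coeffIn M) :
    φ t = skewPsi σ ι z coeff D (fun k m => (σ ^ k).symm (coeff (φ (ι m)) k)) t := by
  simp only [skewPsi, RingEquiv.apply_symm_apply, Finsupp.sum]
  rw [P.map_eq_sum_map_ι_mul hadd hlin ht, Finset.sum_comm]
  refine Finset.sum_congr rfl fun i _ => ?_
  conv_lhs => rw [P.eq_sum_of_support_subset (hD _ (ht i))]
  rw [Finset.sum_mul]
  exact Finset.sum_congr rfl fun k _ => by rw [mul_assoc, ← pow_add]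

theorem exists_map_eq_skewPsi (P : IsSkewPresentation σ ι z coeff)
    (hσR : ∀ s : S, s ∈ R ↔ σ s ∈ R) (hMR : ∀ m ∈ M, ∀ r ∈ R, m * r ∈ M) {n : ℕ}
    {b : Fin n → S} (hb : ∀ j, b j ∈ M)
    (hgen : ∀ m ∈ M, ∃ lam : Fin n → S, (∀ j, lam j ∈ R) ∧ m = ∑ j, b j * lam j)
    (hadd : ∀ t ∈ P.coeffIn M, ∀ t' ∈ P.coeffIn M, φ (t + t') = φ t + φ t')
    (hR : ∀ t ∈ P.coeffIn M, ∀ j, coeff (φ t) j ∈ R)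
    (hlin : ∀ t ∈ P.coeffIn M, ∀ a ∈ P.coeffIn R.toAddSubgroup, φ (t * a) = φ t * a) :
    ∃ (D : Finset ℕ) (f : ℕ → S → S),
      (∀ k ∉ D, ∀ m ∈ M, f k m = 0) ∧
      (∀ k : ℕ, ∀ m ∈ M, ∀ m' ∈ M, f k (m + m') = f k m + f k m') ∧
      (∀ k : ℕ, ∀ m ∈ M, f k m ∈ R) ∧
      (∀ k : ℕ, ∀ m ∈ M, ∀ r ∈ R, f k (m * r) = f k m * r) ∧
      (∀ t ∈ P.coeffIn M, φ t = skewPsi σ ι z coeff D f t) := by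
  set D := Finset.univ.biUnion fun j => (coeff (φ (ι (b j)))).support
  have hD : ∀ m ∈ M, (coeff (φ (ι m))).support ⊆ D := by
    intro m hm
    obtain ⟨lam, hlam, rfl⟩ := hgen m hm
    exact P.support_coeff_map_ι_subset hadd hlin hMR hb hlam
  refine ⟨D, fun k m => (σ ^ k).symm (coeff (φ (ι m)) k), ?_, ?_, ?_, ?_,
    fun t ht => P.map_eq_skewPsi hadd hlin hD ht⟩
  · intro k hk m hm
    simp [Finsupp.notMem_support_iff.mp fun h => hk (hD m hm h)]
  · intro k m hm m' hm'
    dsimp only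
    rw [map_add, hadd _ (P.ι_mem_coeffIn hm) _ (P.ι_mem_coeffIn hm'), P.coeff_add,
      Finsupp.add_apply, map_add]
  · intro k m hm
    exact (Subring.mem_iff_pow_apply_mem hσR k _).mpr (by simpa using hR _ (P.ι_mem_coeffIn hm) k)
  · intro k m hm r hr
    dsimp only
    rw [map_mul, hlin _ (P.ι_mem_coeffIn hm) _ (P.ι_mem_coeffIn (M := R.toAddSubgroup) hr),
      P.coeff_mul_ι, map_mul, RingEquiv.symm_apply_apply]

end Ring

end IsSkewPresentation

theorem stmt9_general {S T : Type*} [Ring S] [Ring T] (R : Subring S) (σ : RingAut S)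
    (hσR : ∀ s : S, s ∈ R ↔ σ s ∈ R)
    (M : AddSubgroup S)
    (hMR : ∀ m ∈ M, ∀ r ∈ R, m * r ∈ M)
    -- `M` is a finitely generated right `R`-module
    (hfg : ∃ (n : ℕ) (b : Fin n → S), (∀ i, b i ∈ M) ∧
      ∀ m ∈ M, ∃ lam : Fin n → S, (∀ i, lam i ∈ R) ∧ m = ∑ i, b i * lam i)
    (ι : S →+* T) (z : T)
    (hcomm : ∀ s : S, z * ι s = ι (σ s) * z)
    (coeff : T → (ℕ →₀ S))
    (hco1 : ∀ t : T, t = (coeff t).sum fun i s => ι s * z ^ i)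
    (hco2 : ∀ c : ℕ →₀ S, coeff (c.sum fun i s => ι s * z ^ i) = c) :
    -- `ψ` is injective
    (∀ (D : Finset ℕ) (f : ℕ → S → S),
      (∀ k ∉ D, ∀ m ∈ M, f k m = 0) →
      (∀ k : ℕ, ∀ m ∈ M, ∀ m' ∈ M, f k (m + m') = f k m + f k m') →
      (∀ k : ℕ, ∀ m ∈ M, f k m ∈ R) →
      (∀ k : ℕ, ∀ m ∈ M, ∀ r ∈ R, f k (m * r) = f k m * r) →
      (∀ t : T, (∀ i, coeff t i ∈ M) →
        (∑ k ∈ D, (coeff t).sum fun i m => ι ((σ ^ k) (f k m)) * z ^ (k + i)) = 0) →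
      ∀ k : ℕ, ∀ m ∈ M, f k m = 0) ∧
    -- `ψ` is surjective
    (∀ φ : T → T,
      (∀ t t' : T, (∀ i, coeff t i ∈ M) → (∀ i, coeff t' i ∈ M) →
        φ (t + t') = φ t + φ t') →
      (∀ t : T, (∀ i, coeff t i ∈ M) → ∀ j : ℕ, coeff (φ t) j ∈ R) →
      (∀ t : T, (∀ i, coeff t i ∈ M) → ∀ a : T, (∀ i, coeff a i ∈ R) →
        φ (t * a) = φ t * a) →
      ∃ (D : Finset ℕ) (f : ℕ → S → S),
        (∀ k ∉ D, ∀ m ∈ M, f k m = 0) ∧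
        (∀ k : ℕ, ∀ m ∈ M, ∀ m' ∈ M, f k (m + m') = f k m + f k m') ∧
        (∀ k : ℕ, ∀ m ∈ M, f k m ∈ R) ∧
        (∀ k : ℕ, ∀ m ∈ M, ∀ r ∈ R, f k (m * r) = f k m * r) ∧
        (∀ t : T, (∀ i, coeff t i ∈ M) →
          φ t = ∑ k ∈ D, (coeff t).sum fun i m => ι ((σ ^ k) (f k m)) * z ^ (k + i))) := by
  have P : IsSkewPresentation σ ι z coeff := ⟨hcomm, hco1, hco2⟩
  refine ⟨fun D f hf0 hfadd _ _ hker k m hm => ?_, fun φ hadd hR hlin => ?_⟩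
  · by_cases hk : k ∈ D
    · refine P.eq_zero_of_skewPsi_ι_eq_zero (fun k => ?_) (hker _ (P.ι_mem_coeffIn hm)) hk
      simpa using hfadd k 0 M.zero_mem 0 M.zero_mem
    · exact hf0 k hk m hm
  · obtain ⟨n, b, hb, hgen⟩ := hfg
    exact P.exists_map_eq_skewPsi hσR hMR hb hgen (fun t ht t' ht' => hadd t t' ht ht') hR hlin

theorem stmt9 {S T : Type*} [Ring S] [Ring T] (R : Subring S) (σ : RingAut S)
    (hσR : ∀ s : S, s ∈ R ↔ σ s ∈ R)
    (M : AddSubgroup S)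
    (hMR : ∀ m ∈ M, ∀ r ∈ R, m * r ∈ M)
    -- `σ(M) = M`
    (hMσ : ∀ m : S, m ∈ M ↔ σ m ∈ M)
    -- `M` is a finitely generated right `R`-module
    (hfg : ∃ (n : ℕ) (b : Fin n → S), (∀ i, b i ∈ M) ∧
      ∀ m ∈ M, ∃ lam : Fin n → S, (∀ i, lam i ∈ R) ∧ m = ∑ i, b i * lam i)
    (ι : S →+* T) (z : T)
    (hcomm : ∀ s : S, z * ι s = ι (σ s) * z)
    (coeff : T → (ℕ →₀ S))
    (hco1 : ∀ t : T, t = (coeff t).sum fun i s => ι s * z ^ i)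
    (hco2 : ∀ c : ℕ →₀ S, coeff (c.sum fun i s => ι s * z ^ i) = c) :
    -- `ψ` is injective
    (∀ (D : Finset ℕ) (f : ℕ → S → S),
      (∀ k ∉ D, ∀ m ∈ M, f k m = 0) →
      (∀ k : ℕ, ∀ m ∈ M, ∀ m' ∈ M, f k (m + m') = f k m + f k m') →
      (∀ k : ℕ, ∀ m ∈ M, f k m ∈ R) →
      (∀ k : ℕ, ∀ m ∈ M, ∀ r ∈ R, f k (m * r) = f k m * r) →
      (∀ t : T, (∀ i, coeff t i ∈ M) →
        (∑ k ∈ D, (coeff t).sum fun i m => ι ((σ ^ k) (f k m)) * z ^ (k + i)) = 0) →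
      ∀ k : ℕ, ∀ m ∈ M, f k m = 0) ∧
    -- `ψ` is surjective
    (∀ φ : T → T,
      (∀ t t' : T, (∀ i, coeff t i ∈ M) → (∀ i, coeff t' i ∈ M) →
        φ (t + t') = φ t + φ t') →
      (∀ t : T, (∀ i, coeff t i ∈ M) → ∀ j : ℕ, coeff (φ t) j ∈ R) →
      (∀ t : T, (∀ i, coeff t i ∈ M) → ∀ a : T, (∀ i, coeff a i ∈ R) →
        φ (t * a) = φ t * a) →
      ∃ (D : Finset ℕ) (f : ℕ → S → S),
        (∀ k ∉ D, ∀ m ∈ M, f k m = 0) ∧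
        (∀ k : ℕ, ∀ m ∈ M, ∀ m' ∈ M, f k (m + m') = f k m + f k m') ∧
        (∀ k : ℕ, ∀ m ∈ M, f k m ∈ R) ∧
        (∀ k : ℕ, ∀ m ∈ M, ∀ r ∈ R, f k (m * r) = f k m * r) ∧
        (∀ t : T, (∀ i, coeff t i ∈ M) →
          φ t = ∑ k ∈ D, (coeff t).sum fun i m => ι ((σ ^ k) (f k m)) * z ^ (k + i))) :=
  stmt9_general R σ hσR M hMR hfg ι z hcomm coeff hco1 hco2
end
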